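/- arXiv:0909.2983 — 2 statements merged into one kernel-verified Lean document; each statement's English description precedes it below -/
import Mathlib

section
/- For positive integers l1 ≤ m1 < l2 ≤ m2 and n, the number of subsets X of [l1,m1] ∪ [l2,m2] containing both l1 and l2 with gcd(X ∪ {n}) = 1 equals the sum over common divisors d of l1, l2 and n of μ(d)·2^(⌊m1/d⌋ + ⌊m2/d⌋ − (l1+l2)/d). -/
/-!
Möbius inversion over the divisors `d` of `gcd(l1, l2, n)` turns the condition
`gcd(X ∪ {n}) = 1` into counting the sets `X` all of whose elements are multiples of `d`.
These are exactly the sets between `{l1, l2}` and the multiples of `d` in the two intervals,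
and `[l, m]` contains `m/d - l/d + 1` multiples of `d` when `d ∣ l`; so for each `d` there are
`2 ^ (m1/d + m2/d - (l1 + l2)/d)` of them.
-/

open Finset ArithmeticFunction
open scoped ArithmeticFunction.Moebius

theorem sum_divisors_moebius_eq_ite (k : ℕ) :
    ∑ d ∈ k.divisors, (μ d : ℤ) = if k = 1 then 1 else 0 := by
  rw [← coe_zeta_mul_apply, coe_zeta_mul_moebius, one_apply]

theorem card_filter_eq_one_eq_sum_moebius {ι : Type*} (F : Finset ι) (g : ι → ℕ) {N : ℕ}
    (hN : N ≠ 0) (hg : ∀ x ∈ F, g x ∣ N) :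
    (#{x ∈ F | g x = 1} : ℤ) = ∑ d ∈ N.divisors, μ d * #{x ∈ F | d ∣ g x} := by
  calc (#{x ∈ F | g x = 1} : ℤ)
      = ∑ x ∈ F, ∑ d ∈ N.divisors, if d ∣ g x then (μ d : ℤ) else 0 := by
        rw [card_filter]
        push_cast
        refine sum_congr rfl fun x hx => ?_
        rw [← sum_filter, Nat.divisors_filter_dvd_of_dvd hN (hg x hx), sum_divisors_moebius_eq_ite]
    _ = ∑ d ∈ N.divisors, μ d * #{x ∈ F | d ∣ g x} := by
        rw [sum_comm]
        refine sum_congr rfl fun d _ => ?_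
        rw [← sum_filter, sum_const, nsmul_eq_mul, mul_comm]

theorem card_filter_dvd_Icc {d l : ℕ} (m : ℕ) (hd : 0 < d) (hdl : d ∣ l) :
    #{x ∈ Icc l m | d ∣ x} = m / d + 1 - l / d := by
  obtain ⟨a, rfl⟩ := hdl
  have himage : {x ∈ Icc (d * a) m | d ∣ x}
      = (Icc a (m / d)).map ⟨(d * ·), mul_right_injective₀ hd.ne'⟩ := by
    ext x
    simp only [mem_filter, mem_Icc, mem_map, Function.Embedding.coeFn_mk, Nat.le_div_iff_mul_le hd]
    constructor
    · rintro ⟨⟨hax, hxm⟩, k, rfl⟩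
      exact ⟨k, ⟨Nat.le_of_mul_le_mul_left hax hd, by rwa [mul_comm]⟩, rfl⟩
    · rintro ⟨k, ⟨hak, hkm⟩, rfl⟩
      exact ⟨⟨Nat.mul_le_mul_left d hak, by rwa [mul_comm]⟩, dvd_mul_right d k⟩
  rw [himage, card_map, Nat.card_Icc, Nat.mul_div_cancel_left a hd]

theorem filter_powerset_dvd_gcd_eq_Icc (S A : Finset ℕ) {d n : ℕ} (hdn : d ∣ n) :
    {X ∈ S.powerset | A ⊆ X ∧ d ∣ Nat.gcd (X.gcd id) n} = Icc A {x ∈ S | d ∣ x} := by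
  ext X
  simp only [mem_filter, mem_powerset, mem_Icc, Nat.dvd_gcd_iff, Finset.dvd_gcd_iff, id, hdn,
    and_true, subset_iff]
  constructor
  · rintro ⟨hXS, hAX, hdX⟩
    exact ⟨hAX, fun x hx => ⟨hXS hx, hdX x hx⟩⟩
  · rintro ⟨hAX, hXS⟩
    exact ⟨fun x hx => (hXS hx).1, hAX, fun x hx => (hXS hx).2⟩

section TwoIntervals

variable {l1 m1 l2 m2 : ℕ}

theorem card_filter_dvd_Icc_union_Icc (h12 : m1 < l2) {d : ℕ} (hd : 0 < d) (hd1 : d ∣ l1)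
    (hd2 : d ∣ l2) :
    #{x ∈ Icc l1 m1 ∪ Icc l2 m2 | d ∣ x} = (m1 / d + 1 - l1 / d) + (m2 / d + 1 - l2 / d) := by
  have hdisj : Disjoint (Icc l1 m1) (Icc l2 m2) := by
    rw [disjoint_left]
    intro x hx1 hx2
    simp only [mem_Icc] at hx1 hx2
    omega
  rw [filter_union, card_union_of_disjoint (disjoint_filter_filter hdisj),
    card_filter_dvd_Icc m1 hd hd1, card_filter_dvd_Icc m2 hd hd2]

theorem card_filter_powerset_dvd_gcd (n : ℕ) (h1 : l1 ≤ m1) (h12 : m1 < l2) (h2 : l2 ≤ m2)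
    {d : ℕ} (hd : 0 < d) (hd1 : d ∣ l1) (hd2 : d ∣ l2) (hdn : d ∣ n) :
    #{X ∈ (Icc l1 m1 ∪ Icc l2 m2).powerset | {l1, l2} ⊆ X ∧ d ∣ Nat.gcd (X.gcd id) n}
      = 2 ^ (m1 / d + m2 / d - (l1 + l2) / d) := by
  have hpair : {l1, l2} ⊆ {x ∈ Icc l1 m1 ∪ Icc l2 m2 | d ∣ x} := by
    simp only [insert_subset_iff, singleton_subset_iff, mem_filter, mem_union, mem_Icc]
    exact ⟨⟨Or.inl ⟨le_rfl, h1⟩, hd1⟩, ⟨Or.inr ⟨le_rfl, h2⟩, hd2⟩⟩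
  have hle1 : l1 / d ≤ m1 / d := Nat.div_le_div_right h1
  have hle2 : l2 / d ≤ m2 / d := Nat.div_le_div_right h2
  rw [filter_powerset_dvd_gcd_eq_Icc _ _ hdn, card_Icc_finset hpair,
    card_filter_dvd_Icc_union_Icc h12 hd hd1 hd2, card_pair (by omega),
    Nat.add_div_of_dvd_right hd1]
  congr 1
  omega

end TwoIntervals

theorem stmt9_general (l1 m1 l2 m2 n : ℕ) (h1 : l1 ≤ m1) (h12 : m1 < l2)
    (h2 : l2 ≤ m2) :
    (((((Finset.Icc l1 m1) ∪ (Finset.Icc l2 m2)).powerset.filter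
        (fun X => l1 ∈ X ∧ l2 ∈ X ∧ Nat.gcd (X.gcd id) n = 1)).card : ℤ)) =
      ∑ d ∈ (Nat.gcd l1 (Nat.gcd l2 n)).divisors, (ArithmeticFunction.moebius d) *
        2 ^ (m1 / d + m2 / d - (l1 + l2) / d) := by
  set F := {X ∈ (Icc l1 m1 ∪ Icc l2 m2).powerset | {l1, l2} ⊆ X}
  have hG : Nat.gcd l1 (Nat.gcd l2 n) ≠ 0 :=
    (Nat.gcd_pos_of_pos_right _ (Nat.gcd_pos_of_pos_left _ (by omega))).ne'
  have hF : ∀ X ∈ F, Nat.gcd (X.gcd id) n ∣ Nat.gcd l1 (Nat.gcd l2 n) := by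
    intro X hX
    simp only [F, mem_filter, insert_subset_iff, singleton_subset_iff] at hX
    obtain ⟨-, hl1, hl2⟩ := hX
    exact Nat.dvd_gcd ((Nat.gcd_dvd_left _ _).trans (gcd_dvd hl1))
      (Nat.gcd_dvd_gcd_of_dvd_left _ (gcd_dvd hl2))
  calc _ = (#{X ∈ F | Nat.gcd (X.gcd id) n = 1} : ℤ) := by
        simp only [F, filter_filter, insert_subset_iff, singleton_subset_iff, and_assoc]
    _ = _ := card_filter_eq_one_eq_sum_moebius F _ hG hF
    _ = _ := by
        refine sum_congr rfl fun d hd => ?_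
        have hdG := Nat.dvd_of_mem_divisors hd
        rw [filter_filter, card_filter_powerset_dvd_gcd n h1 h12 h2 (Nat.pos_of_mem_divisors hd)
          (hdG.trans (Nat.gcd_dvd_left _ _))
          (hdG.trans ((Nat.gcd_dvd_right _ _).trans (Nat.gcd_dvd_left _ _)))
          (hdG.trans ((Nat.gcd_dvd_right _ _).trans (Nat.gcd_dvd_right _ _)))]
        norm_cast

theorem stmt9 (l1 m1 l2 m2 n : ℕ) (hl1 : 0 < l1) (h1 : l1 ≤ m1) (h12 : m1 < l2)
    (h2 : l2 ≤ m2) (hn : 0 < n) :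
    (((((Finset.Icc l1 m1) ∪ (Finset.Icc l2 m2)).powerset.filter
        (fun X => l1 ∈ X ∧ l2 ∈ X ∧ Nat.gcd (X.gcd id) n = 1)).card : ℤ)) =
      ∑ d ∈ (Nat.gcd l1 (Nat.gcd l2 n)).divisors, (ArithmeticFunction.moebius d) *
        2 ^ (m1 / d + m2 / d - (l1 + l2) / d) :=
  stmt9_general l1 m1 l2 m2 n h1 h12 h2
end

section
/- For positive integers l1 ≤ m1 < l2 ≤ m2 and n > 1, the number of nonempty subsets X of [l1,m1] ∪ [l2,m2] with gcd(X ∪ {n}) = 1 equals the sum over divisors d of n of μ(d)·2^(⌊m1/d⌋ + ⌊m2/d⌋ − ⌊(l1−1)/d⌋ − ⌊(l2−1)/d⌋). -/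
/-!
Möbius inversion over the divisors of `n`: `[gcd(g, n) = 1] = ∑_{d ∣ gcd(g, n)} μ(d)`, and the
subsets of `S` all of whose elements are divisible by `d` are the subsets of `S ∩ dℕ`, of which
there are `2 ^ #(S ∩ dℕ)`. Since `gcd ∅ = 0` and `gcd(0, n) = n ≠ 1`, the empty set never
qualifies, so nonemptiness is automatic; and `[l, m]` contains `⌊m/d⌋ - ⌊(l-1)/d⌋` multiples of `d`.
-/

open Finset ArithmeticFunction
open scoped ArithmeticFunction.Moebius

theorem sum_divisors_moebius (m : ℕ) :
    ∑ d ∈ m.divisors, (μ d : ℤ) = if m = 1 then 1 else 0 := by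
  simpa only [coe_mul_zeta_apply, one_apply] using congrArg (· m) moebius_mul_coe_zeta

theorem filter_divisors_dvd_eq_divisors_gcd {n : ℕ} (hn : n ≠ 0) (a : ℕ) :
    {d ∈ n.divisors | d ∣ a} = (a.gcd n).divisors := by
  ext d
  simp only [mem_filter, Nat.mem_divisors, Nat.dvd_gcd_iff, ne_eq, Nat.gcd_eq_zero_iff, hn,
    and_false, not_false_eq_true, and_true]
  tauto

theorem sum_divisors_moebius_ite_dvd {n : ℕ} (hn : n ≠ 0) (a : ℕ) :
    ∑ d ∈ n.divisors, (if d ∣ a then (μ d : ℤ) else 0) = if a.gcd n = 1 then 1 else 0 := by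
  rw [← sum_filter, filter_divisors_dvd_eq_divisors_gcd hn, sum_divisors_moebius]

theorem filter_powerset_dvd_gcd (S : Finset ℕ) (d : ℕ) :
    {X ∈ S.powerset | d ∣ X.gcd id} = {x ∈ S | d ∣ x}.powerset := by
  ext X
  simp only [mem_filter, mem_powerset, Finset.dvd_gcd_iff, id_eq, subset_iff]
  exact ⟨fun ⟨hS, hd⟩ _ hx ↦ ⟨hS hx, hd _ hx⟩, fun h ↦ ⟨fun _ hx ↦ (h hx).1, fun _ hx ↦ (h hx).2⟩⟩

theorem card_filter_powerset_gcd_eq_one (S : Finset ℕ) {n : ℕ} (hn : n ≠ 0) :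
    (#{X ∈ S.powerset | (X.gcd id).gcd n = 1} : ℤ) =
      ∑ d ∈ n.divisors, (μ d : ℤ) * 2 ^ #{x ∈ S | d ∣ x} := by
  calc (#{X ∈ S.powerset | (X.gcd id).gcd n = 1} : ℤ)
      = ∑ X ∈ S.powerset, ∑ d ∈ n.divisors, if d ∣ X.gcd id then (μ d : ℤ) else 0 := by
        simp only [sum_divisors_moebius_ite_dvd hn, sum_boole]
    _ = ∑ d ∈ n.divisors, (μ d : ℤ) * #{X ∈ S.powerset | d ∣ X.gcd id} := by
        rw [sum_comm]
        simp only [← sum_filter, sum_const, nsmul_eq_mul, mul_comm]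
    _ = ∑ d ∈ n.divisors, (μ d : ℤ) * 2 ^ #{x ∈ S | d ∣ x} := by
        simp only [filter_powerset_dvd_gcd, card_powerset, Nat.cast_pow, Nat.cast_ofNat]

theorem card_filter_Icc_dvd {l : ℕ} (hl : 0 < l) (m d : ℕ) :
    #{x ∈ Icc l m | d ∣ x} = m / d - (l - 1) / d := by
  rcases lt_or_ge m l with hml | hlm
  · rw [Icc_eq_empty_of_lt hml, filter_empty, card_empty,
      Nat.sub_eq_zero_of_le (Nat.div_le_div_right (by omega))]
  have hsplit : {x ∈ Icc l m | d ∣ x} = {x ∈ Ioc 0 m | d ∣ x} \ {x ∈ Ioc 0 (l - 1) | d ∣ x} := by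
    ext x
    simp only [mem_filter, mem_Icc, mem_Ioc, mem_sdiff]
    omega
  rw [hsplit, card_sdiff_of_subset (filter_subset_filter _ (Ioc_subset_Ioc_right (by omega))),
    Nat.Ioc_filter_dvd_card_eq_div, Nat.Ioc_filter_dvd_card_eq_div]

theorem stmt13 (l1 m1 l2 m2 n : ℕ) (hl1 : 0 < l1) (h1 : l1 ≤ m1) (h12 : m1 < l2)
    (h2 : l2 ≤ m2) (hn : 1 < n) :
    (((((Finset.Icc l1 m1) ∪ (Finset.Icc l2 m2)).powerset.filter
        (fun X => X.Nonempty ∧ Nat.gcd (X.gcd id) n = 1)).card : ℤ)) =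
      ∑ d ∈ n.divisors, (ArithmeticFunction.moebius d) *
        2 ^ (m1 / d + m2 / d - (l1 - 1) / d - (l2 - 1) / d) := by
  have hnonempty : ∀ X : Finset ℕ, (X.gcd id).gcd n = 1 → X.Nonempty := by
    rintro X hX
    rw [nonempty_iff_ne_empty]
    rintro rfl
    simp only [gcd_empty, Nat.gcd_zero_left] at hX
    omega
  have hdisj : Disjoint (Icc l1 m1) (Icc l2 m2) := disjoint_left.2 fun x hx hx' ↦ by
    simp only [mem_Icc] at hx hx'
    omega
  have hcount : ∀ d, #{x ∈ Icc l1 m1 ∪ Icc l2 m2 | d ∣ x} =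
      m1 / d + m2 / d - (l1 - 1) / d - (l2 - 1) / d := fun d ↦ by
    rw [filter_union, card_union_of_disjoint (disjoint_filter_filter hdisj),
      card_filter_Icc_dvd hl1, card_filter_Icc_dvd (by omega)]
    have := Nat.div_le_div_right (c := d) (show l1 - 1 ≤ m1 by omega)
    have := Nat.div_le_div_right (c := d) (show l2 - 1 ≤ m2 by omega)
    omega
  simp only [and_iff_right_of_imp (hnonempty _), ← hcount]
  exact card_filter_powerset_gcd_eq_one _ (by omega)
end
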